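/- Let σ', σ'' be disjoint finite subsets of natural numbers and let τ', τ'' be a partition of σ'' into two disjoint sets (σ'' = τ' ⊔ τ''). Then sgn(σ' ⊔ τ', τ'') = sgn(σ', τ') · sgn(σ', σ'') · sgn(τ', τ''). -/
import Mathlib

/-- The shuffle sign `sgn(I,J) = (-1)^{#{(i,j) ∈ I×J : i > j}}` of two disjoint
finite sets of natural numbers. -/
def shuffleSign (I J : Finset ℕ) : ℤ :=
  (-1) ^ (((I ×ˢ J).filter (fun p => p.2 < p.1)).card)

/-- If `(σ', σ'')` are disjoint and `σ'' = τ' ⊔ τ''` is a partition of `σ''`, then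
`sgn(σ' ⊔ τ', τ'') = sgn(σ', τ')·sgn(σ', σ'')·sgn(τ', τ'')`. -/
theorem shuffleSign_sqcup (σ' σ'' τ' τ'' : Finset ℕ)
    (h1 : Disjoint σ' σ'') (h2 : Disjoint τ' τ'') (hpart : σ'' = τ' ∪ τ'') :
    shuffleSign (σ' ∪ τ') τ'' =
      shuffleSign σ' τ' * shuffleSign σ' σ'' * shuffleSign τ' τ'' := by
  have hστ : Disjoint σ' τ' := h1.mono_right (hpart ▸ Finset.subset_union_left)
  set a := ((σ' ×ˢ τ'').filter (fun p => p.2 < p.1)).card with ha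
  set b := ((τ' ×ˢ τ'').filter (fun p => p.2 < p.1)).card with hb
  set c := ((σ' ×ˢ τ').filter (fun p => p.2 < p.1)).card with hc
  have hd1 : Disjoint ((σ' ×ˢ τ'').filter (fun p => p.2 < p.1))
      ((τ' ×ˢ τ'').filter (fun p => p.2 < p.1)) :=
    Finset.disjoint_filter_filter (Finset.disjoint_product.mpr (Or.inl hστ))
  have hd2 : Disjoint ((σ' ×ˢ τ').filter (fun p => p.2 < p.1))
      ((σ' ×ˢ τ'').filter (fun p => p.2 < p.1)) :=
    Finset.disjoint_filter_filter (Finset.disjoint_product.mpr (Or.inr h2))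
  have e1 : ((σ' ∪ τ') ×ˢ τ'').filter (fun p => p.2 < p.1) =
      (σ' ×ˢ τ'').filter (fun p => p.2 < p.1) ∪ (τ' ×ˢ τ'').filter (fun p => p.2 < p.1) := by
    rw [Finset.union_product, Finset.filter_union]
  have e2 : (σ' ×ˢ σ'').filter (fun p => p.2 < p.1) =
      (σ' ×ˢ τ').filter (fun p => p.2 < p.1) ∪ (σ' ×ˢ τ'').filter (fun p => p.2 < p.1) := by
    rw [hpart, Finset.product_union, Finset.filter_union]
  simp only [shuffleSign, e1, e2, Finset.card_union_of_disjoint hd1,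
    Finset.card_union_of_disjoint hd2, ← ha, ← hb, ← hc, ← pow_add]
  rw [show c + (c + a) + b = 2 * c + (a + b) by ring]
  simp [pow_add, pow_mul]
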